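/- Let λ₀ ∉ {0, 1/2, 1} and let Δ = S^{ij}∂_i∂_j + T^i∂_i + R be a second-order operator on densities of weight λ₀ over R^m (S symmetric). Then there exists a unique self-adjoint second-order operator Δ̂ on the algebra of densities with Δ̂(1) = 0 and Δ̂|_{λ̂=λ₀} = Δ; it is given by Δ̂ = S^{ij}∂_i∂_j + ∂_jS^{ji}∂_i + (2λ̂-1)γ^i∂_i + λ̂∂_iγ^i + λ̂(λ̂-1)θ with γ^i = (T^i - ∂_jS^{ji})/(2λ₀-1) and θ = (R - λ₀(∂_iT^i - ∂_i∂_jS^{ij})/(2λ₀-1))/(λ₀(λ₀-1)). -/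

import Mathlib

/-- Partial derivative of a function on `ℝ^m` in the `i`-th coordinate direction. -/
noncomputable def pd {m : ℕ} (i : Fin m) (f : (Fin m → ℝ) → ℝ) : (Fin m → ℝ) → ℝ :=
  fun x => fderiv ℝ f x (Pi.single i 1)

/-- A second-order operator `Δ̂ = S^{ij}∂_i∂_j + λ̂ B^i∂_i + λ̂²C + D^i∂_i + λ̂E + F` on the
algebra of densities, encoded by its coefficients. -/
structure SOp (m : ℕ) where
  S : Fin m → Fin m → (Fin m → ℝ) → ℝ
  B : Fin m → (Fin m → ℝ) → ℝ
  C : (Fin m → ℝ) → ℝ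
  D : Fin m → (Fin m → ℝ) → ℝ
  E : (Fin m → ℝ) → ℝ
  F : (Fin m → ℝ) → ℝ

/-- The adjoint of a second-order operator on the algebra of densities, computed from the
rules `(∂_i)* = -∂_i`, `λ̂* = 1-λ̂`, `f* = f` (star is an anti-homomorphism). -/
noncomputable def SOp.adj {m : ℕ} (t : SOp m) : SOp m where
  S := t.S
  B := t.B
  C := t.C
  D := fun i x => (2 * ∑ j, pd j (t.S j i) x) - t.B i x - t.D i x
  E := fun x => (∑ i, pd i (t.B i) x) - 2 * t.C x - t.E x
  F := fun x => (∑ i, ∑ j, pd i (pd j (t.S i j)) x) - (∑ i, pd i (t.B i) x) + t.C x -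
    (∑ i, pd i (t.D i) x) + t.E x + t.F x

/-!
Self-adjointness forces `2D^i = 2∂_jS^{ji} - B^i` and `2E = ∂_iB^i - 2C`. Together with the
restriction equations `λ₀B^i + D^i = T^i` and `λ₀²C + λ₀E = R` this is a linear system with
determinants `2λ₀ - 1` and `λ₀(λ₀ - 1)`, whose unique solution is `B = 2γ`, `D^i = ∂_jS^{ji} - γ^i`,
`C = θ`, `E = ∂_iγ^i - θ`.
-/

open Finset

section PartialDerivative

variable {m : ℕ} {f g : (Fin m → ℝ) → ℝ} {x : Fin m → ℝ}

lemma differentiable_pd (hf : ContDiff ℝ 2 f) (i : Fin m) : Differentiable ℝ (pd i f) :=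
  ((hf.fderiv_right (m := 1) (by norm_num)).clm_apply contDiff_const).differentiable one_ne_zero

lemma pd_sub (hf : DifferentiableAt ℝ f x) (hg : DifferentiableAt ℝ g x) (i : Fin m) :
    pd i (fun y => f y - g y) x = pd i f x - pd i g x := by
  simp [pd, fderiv_fun_sub hf hg]

lemma pd_const_mul (hf : DifferentiableAt ℝ f x) (c : ℝ) (i : Fin m) :
    pd i (fun y => c * f y) x = c * pd i f x := by
  simp [pd, fderiv_const_mul hf]

lemma pd_div_const (hf : DifferentiableAt ℝ f x) (c : ℝ) (i : Fin m) :
    pd i (fun y => f y / c) x = pd i f x / c := by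
  simp [pd, div_eq_mul_inv, fderiv_mul_const hf, mul_comm]

lemma pd_sum {f : Fin m → (Fin m → ℝ) → ℝ} (hf : ∀ j, DifferentiableAt ℝ (f j) x) (i : Fin m) :
    pd i (fun y => ∑ j, f j y) x = ∑ j, pd i (f j) x := by
  simp [pd, fderiv_fun_sum (fun j _ => hf j)]

lemma sum_pd_pd_transpose {S : Fin m → Fin m → (Fin m → ℝ) → ℝ} (hS : ∀ i j, S i j = S j i) :
    ∑ i, ∑ j, pd i (pd j (S i j)) x = ∑ i, ∑ j, pd i (pd j (S j i)) x :=
  sum_congr rfl fun i _ => sum_congr rfl fun j _ => by rw [hS i j]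

end PartialDerivative

attribute [ext] SOp

namespace SOp

variable {m : ℕ}

lemma two_mul_D_of_adj_eq_self {t : SOp m} (h : t.adj = t) (i : Fin m) (x : Fin m → ℝ) :
    2 * t.D i x = 2 * ∑ j, pd j (t.S j i) x - t.B i x := by
  have := congrFun (congrFun (congrArg SOp.D h) i) x
  simp only [adj] at this
  linarith

lemma two_mul_E_of_adj_eq_self {t : SOp m} (h : t.adj = t) (x : Fin m → ℝ) :
    2 * t.E x = ∑ i, pd i (t.B i) x - 2 * t.C x := by
  have := congrFun (congrArg SOp.E h) x
  simp only [adj] at this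
  linarith

/-- The zeroth-order part of `t.adj = t` is implied by the first-order parts: the second
derivatives of `S` cancel by symmetry. -/
lemma adj_eq_self_of {t : SOp m} (hS : ∀ i j, t.S i j = t.S j i)
    (hSd : ∀ i j, Differentiable ℝ (pd j (t.S j i))) (hB : ∀ i, Differentiable ℝ (t.B i))
    (hD : ∀ i x, 2 * t.D i x = 2 * ∑ j, pd j (t.S j i) x - t.B i x)
    (hE : ∀ x, 2 * t.E x = ∑ i, pd i (t.B i) x - 2 * t.C x) :
    t.adj = t := by
  have hDfun : ∀ i, t.D i = fun y => ∑ j, pd j (t.S j i) y - t.B i y / 2 :=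
    fun i => funext fun y => by linarith [hD i y]
  have hpdD : ∀ i x, pd i (t.D i) x = ∑ j, pd i (pd j (t.S j i)) x - pd i (t.B i) x / 2 := by
    intro i x
    have hσ : DifferentiableAt ℝ (fun y => ∑ j, pd j (t.S j i) y) x :=
      DifferentiableAt.fun_sum fun j _ => (hSd i j) x
    rw [hDfun i, pd_sub hσ (by fun_prop), pd_sum (fun j => hSd i j x),
      pd_div_const (hB i x)]
  refine SOp.ext rfl rfl rfl (funext fun i => funext fun x => ?_) (funext fun x => ?_)
    (funext fun x => ?_) <;> simp only [adj]
  · linarith [hD i x]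
  · linarith [hE x]
  · simp only [hpdD, sum_sub_distrib, sum_pd_pd_transpose hS, ← sum_div]
    linarith [hE x]

/-- `Δ̂(1) = 0` is `F = 0`, and restricting at `λ̂ = lam0` leaves
`S^{ij}∂_i∂_j + (lam0 B^i + D^i)∂_i + (lam0² C + lam0 E + F)`. -/
def IsNormalizedSelfAdjointLift (lam0 : ℝ) (S : Fin m → Fin m → (Fin m → ℝ) → ℝ)
    (T : Fin m → (Fin m → ℝ) → ℝ) (R : (Fin m → ℝ) → ℝ) (t : SOp m) : Prop :=
  t.adj = t ∧ (∀ x, t.F x = 0) ∧ t.S = S ∧ (∀ i x, lam0 * t.B i x + t.D i x = T i x) ∧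
    (∀ x, lam0 ^ 2 * t.C x + lam0 * t.E x + t.F x = R x)

namespace IsNormalizedSelfAdjointLift

variable {lam0 : ℝ} {S : Fin m → Fin m → (Fin m → ℝ) → ℝ} {T : Fin m → (Fin m → ℝ) → ℝ}
  {R : (Fin m → ℝ) → ℝ} {t : SOp m}

lemma B_eq (ht : t.IsNormalizedSelfAdjointLift lam0 S T R) (i : Fin m) (x : Fin m → ℝ) :
    (2 * lam0 - 1) * t.B i x = 2 * (T i x - ∑ j, pd j (S j i) x) := by
  obtain ⟨hadj, -, rfl, hT, -⟩ := ht
  linear_combination 2 * hT i x - two_mul_D_of_adj_eq_self hadj i x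

lemma C_eq (ht : t.IsNormalizedSelfAdjointLift lam0 S T R) (x : Fin m → ℝ) :
    2 * (lam0 * (lam0 - 1)) * t.C x = 2 * R x - lam0 * ∑ i, pd i (t.B i) x := by
  obtain ⟨hadj, hF, -, -, hR⟩ := ht
  linear_combination 2 * hR x - 2 * hF x - lam0 * two_mul_E_of_adj_eq_self hadj x

lemma unique (h0 : lam0 ≠ 0) (hhalf : lam0 ≠ 1 / 2) (h1 : lam0 ≠ 1)
    {t' : SOp m} (ht : t.IsNormalizedSelfAdjointLift lam0 S T R)
    (ht' : t'.IsNormalizedSelfAdjointLift lam0 S T R) : t = t' := by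
  have hc : (2 : ℝ) * lam0 - 1 ≠ 0 := fun h => hhalf (by linarith)
  have hB : t.B = t'.B := funext fun i => funext fun x =>
    mul_left_cancel₀ hc ((ht.B_eq i x).trans (ht'.B_eq i x).symm)
  have hC : t.C = t'.C := funext fun x => mul_left_cancel₀
    (mul_ne_zero two_ne_zero (mul_ne_zero h0 (sub_ne_zero.mpr h1)))
    ((ht.C_eq x).trans (by rw [ht'.C_eq x, hB]))
  obtain ⟨hadj, hF, hS, hT, -⟩ := ht
  obtain ⟨hadj', hF', hS', hT', -⟩ := ht'
  refine SOp.ext (hS.trans hS'.symm) hB hC (funext fun i => funext fun x => ?_)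
    (funext fun x => ?_) (funext fun x => by rw [hF, hF'])
  · linear_combination hT i x - hT' i x - lam0 * congrFun (congrFun hB i) x
  · linarith [two_mul_E_of_adj_eq_self hadj x, two_mul_E_of_adj_eq_self hadj' x,
      congrFun hC x, show ∑ i, pd i (t.B i) x = ∑ i, pd i (t'.B i) x by rw [hB]]

end IsNormalizedSelfAdjointLift

end SOp

section Gamma

variable {m : ℕ} {lam0 : ℝ} {S : Fin m → Fin m → (Fin m → ℝ) → ℝ} {T γ : Fin m → (Fin m → ℝ) → ℝ}

lemma differentiable_gamma (hS : ∀ i j, ContDiff ℝ 2 (S i j)) (hT : ∀ i, Differentiable ℝ (T i))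
    (hγ : ∀ i x, γ i x = (T i x - ∑ j, pd j (S j i) x) / (2 * lam0 - 1)) (i : Fin m) :
    Differentiable ℝ (γ i) := by
  have hTd := hT i
  have hSd := fun j => differentiable_pd (hS j i) j
  rw [show γ i = _ from funext (hγ i)]
  fun_prop

lemma sum_pd_gamma (hSsymm : ∀ i j, S i j = S j i) (hS : ∀ i j, ContDiff ℝ 2 (S i j))
    (hT : ∀ i, Differentiable ℝ (T i))
    (hγ : ∀ i x, γ i x = (T i x - ∑ j, pd j (S j i) x) / (2 * lam0 - 1)) (x : Fin m → ℝ) :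
    ∑ i, pd i (γ i) x =
      ((∑ i, pd i (T i) x) - ∑ i, ∑ j, pd i (pd j (S i j)) x) / (2 * lam0 - 1) := by
  have hpd : ∀ i, pd i (γ i) x =
      (pd i (T i) x - ∑ j, pd i (pd j (S j i)) x) / (2 * lam0 - 1) := by
    intro i
    have hTd : DifferentiableAt ℝ (T i) x := hT i x
    have hSd : ∀ j, DifferentiableAt ℝ (pd j (S j i)) x := fun j => differentiable_pd (hS j i) j x
    have hσd : DifferentiableAt ℝ (fun y => ∑ j, pd j (S j i) y) x :=
      DifferentiableAt.fun_sum fun j _ => hSd j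
    rw [show γ i = _ from funext (hγ i), pd_div_const (hTd.fun_sub hσd), pd_sub hTd hσd,
      pd_sum hSd]
  rw [sum_congr rfl fun i _ => hpd i, ← sum_div, sum_sub_distrib, sum_pd_pd_transpose hSsymm]

lemma isNormalizedSelfAdjointLift_of_gamma_theta (h0 : lam0 ≠ 0) (hhalf : lam0 ≠ 1 / 2)
    (h1 : lam0 ≠ 1) {R θ : (Fin m → ℝ) → ℝ} (hSsymm : ∀ i j, S i j = S j i)
    (hS : ∀ i j, ContDiff ℝ 2 (S i j)) (hT : ∀ i, Differentiable ℝ (T i))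
    (hγ : ∀ i x, γ i x = (T i x - ∑ j, pd j (S j i) x) / (2 * lam0 - 1))
    (hθ : ∀ x, θ x = (R x - lam0 * ((∑ i, pd i (T i) x) - ∑ i, ∑ j, pd i (pd j (S i j)) x) /
          (2 * lam0 - 1)) / (lam0 * (lam0 - 1))) :
    SOp.IsNormalizedSelfAdjointLift lam0 S T R
      ⟨S, fun i x => 2 * γ i x, θ, fun i x => (∑ j, pd j (S j i) x) - γ i x,
        fun x => (∑ i, pd i (γ i) x) - θ x, fun _ => 0⟩ := by
  have hc : (2 : ℝ) * lam0 - 1 ≠ 0 := fun h => hhalf (by linarith)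
  have hγd := differentiable_gamma hS hT hγ
  refine ⟨SOp.adj_eq_self_of hSsymm (fun i j => differentiable_pd (hS j i) j)
    (fun i => (hγd i).const_mul 2) (fun i x => by ring) (fun x => ?_),
    fun _ => rfl, rfl, fun i x => ?_, fun x => ?_⟩
  · simp only [pd_const_mul (hγd _ x), ← mul_sum]
    ring
  · linear_combination (eq_div_iff hc).mp (hγ i x)
  · show lam0 ^ 2 * θ x + lam0 * (∑ i, pd i (γ i) x - θ x) + 0 = R x
    rw [hθ x, sum_pd_gamma hSsymm hS hT hγ x]
    field_simp
    ring

end Gamma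

theorem stmt_10_general (m : ℕ) (lam0 : ℝ) (h0 : lam0 ≠ 0) (hhalf : lam0 ≠ 1/2) (h1 : lam0 ≠ 1)
    (S : Fin m → Fin m → (Fin m → ℝ) → ℝ) (T : Fin m → (Fin m → ℝ) → ℝ)
    (R : (Fin m → ℝ) → ℝ) (hSsymm : ∀ i j, S i j = S j i)
    (hS : ∀ i j, ContDiff ℝ (⊤ : ℕ∞) (S i j)) (hT : ∀ i, ContDiff ℝ (⊤ : ℕ∞) (T i)) :
    ∀ γ : Fin m → (Fin m → ℝ) → ℝ,
      (∀ i x, γ i x = (T i x - ∑ j, pd j (S j i) x) / (2 * lam0 - 1)) →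
    ∀ θ : (Fin m → ℝ) → ℝ,
      (∀ x, θ x = (R x - lam0 * ((∑ i, pd i (T i) x) - ∑ i, ∑ j, pd i (pd j (S i j)) x) /
          (2 * lam0 - 1)) / (lam0 * (lam0 - 1))) →
    ∀ Δ₀ : SOp m,
      Δ₀ = ⟨S, fun i x => 2 * γ i x, θ,
            fun i x => (∑ j, pd j (S j i) x) - γ i x,
            fun x => (∑ i, pd i (γ i) x) - θ x,
            fun _ => 0⟩ →
      -- Δ₀ is self-adjoint, normalised and restricts to Δ at weight λ₀ ...
      (Δ₀.adj = Δ₀ ∧ (∀ x, Δ₀.F x = 0) ∧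
        Δ₀.S = S ∧ (∀ i x, lam0 * Δ₀.B i x + Δ₀.D i x = T i x) ∧
        (∀ x, lam0 ^ 2 * Δ₀.C x + lam0 * Δ₀.E x + Δ₀.F x = R x)) ∧
      -- ... and it is the unique such operator.
      (∀ t : SOp m,
        (t.adj = t ∧ (∀ x, t.F x = 0) ∧
          t.S = S ∧ (∀ i x, lam0 * t.B i x + t.D i x = T i x) ∧
          (∀ x, lam0 ^ 2 * t.C x + lam0 * t.E x + t.F x = R x)) → t = Δ₀) := by
  rintro γ hγ θ hθ Δ₀ rfl
  have hS2 : ∀ i j, ContDiff ℝ 2 (S i j) := fun i j =>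
    (hS i j).of_le (WithTop.coe_le_coe.mpr le_top)
  have hTd : ∀ i, Differentiable ℝ (T i) := fun i => (hT i).differentiable (by simp)
  have hlift := isNormalizedSelfAdjointLift_of_gamma_theta h0 hhalf h1 hSsymm hS2 hTd hγ hθ
  exact ⟨hlift, fun t ht => SOp.IsNormalizedSelfAdjointLift.unique h0 hhalf h1 ht hlift⟩

/-- For `λ₀ ∉ {0, 1/2, 1}` and a second-order operator `Δ = S^{ij}∂_i∂_j + T^i∂_i + R` on
densities of weight `λ₀`, there is a unique self-adjoint second-order operator `Δ̂` on the
algebra of densities with `Δ̂(1) = 0` (no zeroth-order term) whose restriction to weight `λ₀`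
is `Δ`; it is `S^{ij}∂_i∂_j + ∂_jS^{ji}∂_i + (2λ̂-1)γ^i∂_i + λ̂∂_iγ^i + λ̂(λ̂-1)θ` with
`γ^i = (T^i - ∂_jS^{ji})/(2λ₀-1)` and
`θ = (R - λ₀(∂_iT^i - ∂_i∂_jS^{ij})/(2λ₀-1))/(λ₀(λ₀-1))`. -/
theorem stmt_10 (m : ℕ) (lam0 : ℝ) (h0 : lam0 ≠ 0) (hhalf : lam0 ≠ 1/2) (h1 : lam0 ≠ 1)
    (S : Fin m → Fin m → (Fin m → ℝ) → ℝ) (T : Fin m → (Fin m → ℝ) → ℝ)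
    (R : (Fin m → ℝ) → ℝ) (hSsymm : ∀ i j, S i j = S j i)
    (hS : ∀ i j, ContDiff ℝ (⊤ : ℕ∞) (S i j)) (hT : ∀ i, ContDiff ℝ (⊤ : ℕ∞) (T i))
    (hR : ContDiff ℝ (⊤ : ℕ∞) R) :
    ∀ γ : Fin m → (Fin m → ℝ) → ℝ,
      (∀ i x, γ i x = (T i x - ∑ j, pd j (S j i) x) / (2 * lam0 - 1)) →
    ∀ θ : (Fin m → ℝ) → ℝ,
      (∀ x, θ x = (R x - lam0 * ((∑ i, pd i (T i) x) - ∑ i, ∑ j, pd i (pd j (S i j)) x) /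
          (2 * lam0 - 1)) / (lam0 * (lam0 - 1))) →
    ∀ Δ₀ : SOp m,
      Δ₀ = ⟨S, fun i x => 2 * γ i x, θ,
            fun i x => (∑ j, pd j (S j i) x) - γ i x,
            fun x => (∑ i, pd i (γ i) x) - θ x,
            fun _ => 0⟩ →
      -- Δ₀ is self-adjoint, normalised and restricts to Δ at weight λ₀ ...
      (Δ₀.adj = Δ₀ ∧ (∀ x, Δ₀.F x = 0) ∧
        Δ₀.S = S ∧ (∀ i x, lam0 * Δ₀.B i x + Δ₀.D i x = T i x) ∧
        (∀ x, lam0 ^ 2 * Δ₀.C x + lam0 * Δ₀.E x + Δ₀.F x = R x)) ∧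
      -- ... and it is the unique such operator.
      (∀ t : SOp m,
        (t.adj = t ∧ (∀ x, t.F x = 0) ∧
          t.S = S ∧ (∀ i x, lam0 * t.B i x + t.D i x = T i x) ∧
          (∀ x, lam0 ^ 2 * t.C x + lam0 * t.E x + t.F x = R x)) → t = Δ₀) :=
  stmt_10_general m lam0 h0 hhalf h1 S T R hSsymm hS hT
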